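/- arXiv:1712.05639 — 6 statements merged into one kernel-verified Lean document; each statement's English description precedes it below -/
import Mathlib

section
/- Let P be a list of natural numbers of even length that is a palindrome (i.e., P equals its reversal). Then the number of inversions of P (pairs of positions i < j with P_i > P_j) is even. -/
/-- Number of inversions of a list: pairs i < j with L_i > L_j. -/
def dis (L : List ℕ) : ℕ :=
  ((Finset.range L.length ×ˢ Finset.range L.length).filter
    (fun p => p.1 < p.2 ∧ L.getD p.1 0 > L.getD p.2 0)).card

/-- Nearly symmetric: remove all 1's; if odd length, remove first entry;
    the result must be a palindrome. -/
def nearSym (L : List ℕ) : Prop :=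
  let R := L.filter (fun x => x ≠ 1)
  let R' := if R.length % 2 = 1 then R.tail else R
  R' = R'.reverse

lemma pal_getD (P : List ℕ) (hpal : P = P.reverse) {i : ℕ} (hi : i < P.length) :
    P.getD (P.length - 1 - i) 0 = P.getD i 0 := by
  have h1 : P.length - 1 - i < P.length := by omega
  have h2 : i < P.reverse.length := by simpa using hi
  rw [List.getD_eq_getElem _ _ h1, List.getD_eq_getElem _ _ hi]
  calc P[P.length - 1 - i] = P.reverse[i] := (List.getElem_reverse h2).symm
    _ = P[i] := List.getElem_of_eq hpal.symm h2

theorem stmt0 (P : List ℕ) (hlen : P.length % 2 = 0) (hpal : P = P.reverse) :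
    dis P % 2 = 0 := by
  set n := P.length with hn
  set s := ((Finset.range n ×ˢ Finset.range n).filter
    (fun p => p.1 < p.2 ∧ P.getD p.1 0 > P.getD p.2 0)) with hs
  have hmem : ∀ p : ℕ × ℕ, p ∈ s ↔
      p.1 < n ∧ p.2 < n ∧ p.1 < p.2 ∧ P.getD p.1 0 > P.getD p.2 0 := by
    intro p
    simp only [hs, Finset.mem_filter, Finset.mem_product, Finset.mem_range]
    tauto
  -- key fact: an inversion can't have i + j = n - 1
  have hne : ∀ p : ℕ × ℕ, p ∈ s → p.1 + p.2 ≠ n - 1 := by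
    intro p hp h
    rcases (hmem p).1 hp with ⟨h1, h2, h3, h4⟩
    have e : n - 1 - p.1 = p.2 := by omega
    have := pal_getD P hpal h1
    rw [hn.symm] at this
    rw [e] at this
    omega
  have key : (∑ _x ∈ s, (1 : ZMod 2)) = 0 := by
    apply Finset.sum_involution
      (fun p _ => if p.1 + p.2 < n - 1 then ((p.1, n - 1 - p.2) : ℕ × ℕ)
        else (n - 1 - p.1, p.2))
    · intro a ha; decide
    · -- no fixed points (uses n even)
      intro a ha _
      rcases (hmem a).1 ha with ⟨h1, h2, h3, h4⟩
      split
      · intro h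
        have e2 : n - 1 - a.2 = a.2 := congrArg Prod.snd h
        omega
      · intro h
        have e1 : n - 1 - a.1 = a.1 := congrArg Prod.fst h
        omega
    · -- maps s to s
      intro a ha
      rcases (hmem a).1 ha with ⟨h1, h2, h3, h4⟩
      have hne' := hne a ha
      split
      · rename_i hlt
        rw [hmem]
        refine ⟨by omega, by omega, by omega, ?_⟩
        show P.getD a.1 0 > P.getD (P.length - 1 - a.2) 0
        rw [pal_getD P hpal h2]
        exact h4
      · rename_i hge
        rw [hmem]
        refine ⟨by omega, by omega, by omega, ?_⟩
        show P.getD (P.length - 1 - a.1) 0 > P.getD a.2 0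
        rw [pal_getD P hpal h1]
        exact h4
    · -- involution
      intro a ha
      rcases (hmem a).1 ha with ⟨h1, h2, h3, h4⟩
      have hne' := hne a ha
      split
      · rename_i hlt
        have : a.1 + (n - 1 - a.2) < n - 1 := by omega
        rw [if_pos this]
        ext <;> simp <;> omega
      · rename_i hge
        have : ¬ (n - 1 - a.1 + a.2 < n - 1) := by omega
        rw [if_neg this]
        ext <;> simp <;> omega
  have hcast : ((s.card : ℕ) : ZMod 2) = 0 := by
    rw [← key]; simp
  have hdvd : (2 : ℕ) ∣ s.card := (ZMod.natCast_eq_zero_iff _ _).1 hcast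
  show s.card % 2 = 0
  omega
end

section
/- Let A, B be lists of natural numbers and let P be an even-length palindrome list of natural numbers. Then dis(A ++ P ++ B) ≡ dis(A ++ B) (mod 2), i.e., removing a contiguous even-length palindrome block from a list does not change the parity of the number of inversions. -/
lemma countP_eq_sum (a : ℕ) (l : List ℕ) :
    (l.countP (fun b => decide (b < a))) =
      ∑ j ∈ Finset.range l.length, if l.getD j 0 < a then 1 else 0 := by
  induction l with
  | nil => simp
  | cons b l ih =>
      rw [List.countP_cons]
      simp only [List.length_cons]
      rw [Finset.sum_range_succ']
      simp only [List.getD_cons_succ, List.getD_cons_zero, ← ih, decide_eq_true_eq]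

lemma dis_cons (a : ℕ) (l : List ℕ) :
    dis (a :: l) = l.countP (fun b => decide (b < a)) + dis l := by
  unfold dis
  rw [Finset.card_filter, Finset.card_filter, Finset.sum_product, Finset.sum_product]
  simp only [List.length_cons]
  rw [Finset.sum_range_succ']
  have h0 : ∑ j ∈ Finset.range (l.length + 1),
      (if (0 < j ∧ (a :: l).getD 0 0 > (a :: l).getD j 0) then 1 else 0) =
      l.countP (fun b => decide (b < a)) := by
    rw [Finset.sum_range_succ', countP_eq_sum]
    simp
  have h1 : ∀ i, ∑ j ∈ Finset.range (l.length + 1),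
      (if (i + 1 < j ∧ (a :: l).getD (i+1) 0 > (a :: l).getD j 0) then 1 else 0) =
      ∑ j ∈ Finset.range l.length,
      (if (i < j ∧ l.getD i 0 > l.getD j 0) then 1 else 0) := by
    intro i
    rw [Finset.sum_range_succ']
    simp
  simp only [h1, h0]
  omega

lemma dis_append_cons (X Y : List ℕ) (x : ℕ) :
    dis (X ++ x :: Y) = dis (X ++ Y) + Y.countP (fun b => decide (b < x))
      + X.countP (fun b => decide (x < b)) := by
  induction X with
  | nil => simp [dis_cons]; omega
  | cons a X ih =>
      simp only [List.cons_append, dis_cons, ih, List.countP_append, List.countP_cons]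
      simp
      omega

lemma tri (x : ℕ) (l : List ℕ) :
    l.countP (fun b => decide (b < x)) + l.countP (fun b => decide (x < b))
      + l.count x = l.length := by
  induction l with
  | nil => simp
  | cons a l ih =>
      simp only [List.countP_cons, List.count_cons, List.length_cons,
        decide_eq_true_eq, beq_iff_eq]
      rcases lt_trichotomy a x with h | h | h
      · simp only [h, if_true, h.ne, if_false, Nat.lt_asymm h]
        omega
      · subst h
        simp only [lt_self_iff_false, if_false, if_true]
        omega
      · simp only [h, if_true, h.ne', if_false, Nat.lt_asymm h]
        omega

lemma pal_count : ∀ {P : List ℕ}, P.Palindrome → P.length % 2 = 0 →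
    ∀ x, P.count x % 2 = 0 := by
  intro P hp
  induction hp with
  | nil => simp
  | singleton a => intro h; simp at h
  | cons_concat a hl ih =>
      rename_i l
      intro h x
      have hlen : l.length % 2 = 0 := by
        simp only [List.length_cons, List.length_append, List.length_singleton, List.length_nil] at h
        omega
      have := ih hlen x
      simp only [List.count_cons, List.count_append, List.count_singleton,
        List.count_nil, beq_iff_eq]
      omega

lemma key : ∀ {P : List ℕ}, P.Palindrome → P.length % 2 = 0 →
    ∀ A B, dis (A ++ P ++ B) % 2 = dis (A ++ B) % 2 := by
  intro P hp
  induction hp with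
  | nil => simp
  | singleton a => intro h; simp at h
  | cons_concat x hl ih =>
      rename_i l
      intro h A B
      have hlen : l.length % 2 = 0 := by
        simp only [List.length_cons, List.length_append, List.length_singleton, List.length_nil] at h
        omega
      have hcnt := pal_count hl hlen x
      have htri := tri x l
      have e1 : A ++ (x :: (l ++ [x])) ++ B = A ++ x :: (l ++ x :: B) := by simp
      have e2 : A ++ (l ++ x :: B) = (A ++ l) ++ x :: B := by simp
      rw [e1, dis_append_cons, e2, dis_append_cons]
      have ihAB := ih hlen A B
      rw [List.append_assoc] at *
      simp only [List.countP_append, List.countP_cons, lt_self_iff_false,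
        decide_false, Bool.false_eq_true, if_false, add_zero] at *
      omega

theorem stmt3 (A B P : List ℕ) (hlen : P.length % 2 = 0) (hpal : P = P.reverse) :
    dis (A ++ P ++ B) % 2 = dis (A ++ B) % 2 := by
  exact key (List.Palindrome.of_reverse_eq hpal.symm) hlen A B
end

section
/- Let L be a list of natural numbers and let p be a decidable predicate on natural numbers such that p(x) and ¬p(y) imply x ≠ y. Then dis(L) ≡ dis(L.filter p ++ L.filter (fun x => ¬ p x)) + k (mod 2), where k is the number of pairs of indices i < j in L with ¬p(L_i) and p(L_j). -/
/-- Recursive count of pairs i < j with r L_i L_j. -/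
def pcnt (r : ℕ → ℕ → Prop) [DecidableRel r] : List ℕ → ℕ
  | [] => 0
  | a :: L => L.countP (fun b => decide (r a b)) + pcnt r L

def crossCnt (r : ℕ → ℕ → Prop) [DecidableRel r] : List ℕ → List ℕ → ℕ
  | [], _ => 0
  | a :: A, B => B.countP (fun b => decide (r a b)) + crossCnt r A B

lemma countP_eq_sum_s8 (q : ℕ → Bool) (L : List ℕ) :
    L.countP q = ∑ j ∈ Finset.range L.length, if q (L.getD j 0) then 1 else 0 := by
  induction L with
  | nil => simp
  | cons a L ih =>
    rw [List.countP_cons, List.length_cons, Finset.sum_range_succ']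
    simp [ih]

lemma card_eq_pcnt (r : ℕ → ℕ → Prop) [DecidableRel r] (L : List ℕ) :
    ((Finset.range L.length ×ˢ Finset.range L.length).filter
      (fun q => q.1 < q.2 ∧ r (L.getD q.1 0) (L.getD q.2 0))).card = pcnt r L := by
  induction L with
  | nil => simp [pcnt]
  | cons a L ih =>
    rw [Finset.card_filter, Finset.sum_product] at *
    rw [List.length_cons, Finset.sum_range_succ']
    have h0 : ∑ j ∈ Finset.range (L.length + 1),
        (if (0 : ℕ) < j ∧ r ((a :: L).getD 0 0) ((a :: L).getD j 0) then 1 else 0) =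
        L.countP (fun b => decide (r a b)) := by
      rw [Finset.sum_range_succ', countP_eq_sum_s8]
      simp
    have h1 : ∀ i, ∑ j ∈ Finset.range (L.length + 1),
        (if i + 1 < j ∧ r ((a :: L).getD (i+1) 0) ((a :: L).getD j 0) then 1 else 0) =
        ∑ j ∈ Finset.range L.length,
        (if i < j ∧ r (L.getD i 0) (L.getD j 0) then 1 else 0) := by
      intro i
      rw [Finset.sum_range_succ']
      simp
    rw [h0]
    rw [Finset.sum_congr rfl (fun i _ => h1 i), ih, pcnt]
    omega

lemma pcnt_append (r : ℕ → ℕ → Prop) [DecidableRel r] (A B : List ℕ) :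
    pcnt r (A ++ B) = pcnt r A + crossCnt r A B + pcnt r B := by
  induction A with
  | nil => simp [pcnt, crossCnt]
  | cons a A ih => simp [pcnt, crossCnt, List.countP_append, ih]; ring

lemma crossCnt_cons_right (r : ℕ → ℕ → Prop) [DecidableRel r] (A : List ℕ) (b : ℕ) (B : List ℕ) :
    crossCnt r A (b :: B) = A.countP (fun a => decide (r a b)) + crossCnt r A B := by
  induction A with
  | nil => simp [crossCnt]
  | cons a A ih => simp [crossCnt, List.countP_cons, ih]; ring

lemma countP_partition (p : ℕ → Prop) [DecidablePred p] (q : ℕ → Bool) (L : List ℕ) :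
    L.countP q = (L.filter (fun x => decide (p x))).countP q
      + (L.filter (fun x => decide (¬ p x))).countP q := by
  induction L with
  | nil => simp
  | cons a L ih =>
    by_cases h : p a <;>
      simp [List.filter_cons, List.countP_cons, h, ih] <;> omega

lemma countP_gt_opp (a : ℕ) (A : List ℕ) (h : ∀ x ∈ A, x ≠ a) :
    A.countP (fun x => decide (a > x)) + A.countP (fun x => decide (x > a)) = A.length := by
  induction A with
  | nil => simp
  | cons b A ih =>
    have hb : b ≠ a := h b (by simp)
    have := ih (fun x hx => h x (by simp [hx]))
    rcases lt_trichotomy b a with hlt | heq | hgt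
    · simp [List.countP_cons, hlt, Nat.not_lt_of_lt hlt] at *; omega
    · exact absurd heq hb
    · simp [List.countP_cons, hgt, Nat.not_lt_of_lt hgt] at *; omega

lemma main_parity (p : ℕ → Prop) [DecidablePred p]
    (hp : ∀ x y, p x → ¬ p y → x ≠ y) (L : List ℕ) :
    ((pcnt (· > ·) L : ℕ) : ZMod 2) =
      ((pcnt (· > ·) (L.filter (fun x => decide (p x)) ++ L.filter (fun x => decide (¬ p x))) : ℕ) : ZMod 2)
      + ((pcnt (fun x y => ¬ p x ∧ p y) L : ℕ) : ZMod 2) := by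
  induction L with
  | nil => simp [pcnt]
  | cons a L ih =>
    set F := L.filter (fun x => decide (p x)) with hF
    set G := L.filter (fun x => decide (¬ p x)) with hG
    by_cases h : p a
    · have hfc : (a :: L).filter (fun x => decide (p x)) = a :: F := by
        rw [List.filter_cons, if_pos (by simp [h])]
      have hgc : (a :: L).filter (fun x => decide (¬ p x)) = G := by
        rw [List.filter_cons, if_neg (by simp [h])]
      rw [hfc, hgc]
      have hk : (a :: L).countP (fun b => decide (¬ p a ∧ p b)) = 0 := by
        simp [List.countP_eq_zero, h]
      show ((L.countP (fun b => decide (a > b)) + pcnt (· > ·) L : ℕ) : ZMod 2) = _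
      rw [show ((a :: F) ++ G) = a :: (F ++ G) by simp]
      show _ = ((((F ++ G).countP (fun b => decide (a > b)) + pcnt (· > ·) (F ++ G) : ℕ)) : ZMod 2)
        + ((L.countP (fun b => decide (¬ p a ∧ p b)) + pcnt (fun x y => ¬ p x ∧ p y) L : ℕ) : ZMod 2)
      have hze : L.countP (fun b => decide (¬ p a ∧ p b)) = 0 := by
        simp [List.countP_eq_zero, h]
      rw [List.countP_append, hze, countP_partition p (fun b => decide (a > b)) L, ← hF, ← hG]
      push_cast
      rw [ih]
      ring
    · have hfc : (a :: L).filter (fun x => decide (p x)) = F := by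
        rw [List.filter_cons, if_neg (by simp [h])]
      have hgc : (a :: L).filter (fun x => decide (¬ p x)) = a :: G := by
        rw [List.filter_cons, if_pos (by simp [h])]
      rw [hfc, hgc]
      show ((L.countP (fun b => decide (a > b)) + pcnt (· > ·) L : ℕ) : ZMod 2) =
        _ + ((L.countP (fun b => decide (¬ p a ∧ p b)) + pcnt (fun x y => ¬ p x ∧ p y) L : ℕ) : ZMod 2)
      have hkc : L.countP (fun b => decide (¬ p a ∧ p b)) = F.length := by
        rw [hF, ← List.countP_eq_length_filter]
        apply List.countP_congr
        intro x _
        simp [h]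
      rw [pcnt_append, crossCnt_cons_right]
      show _ = ((pcnt (· > ·) F + (F.countP (fun x => decide (x > a)) + crossCnt (· > ·) F G)
          + (G.countP (fun b => decide (a > b)) + pcnt (· > ·) G) : ℕ) : ZMod 2) + _
      have hne : ∀ x ∈ F, x ≠ a := by
        intro x hx
        rw [hF] at hx
        have := List.of_mem_filter hx
        exact hp x a (by simpa using this) h
      have hopp := countP_gt_opp a F hne
      rw [countP_partition p (fun b => decide (a > b)) L, ← hF, ← hG, hkc]
      have hGsplit : pcnt (· > ·) (F ++ G) = pcnt (· > ·) F + crossCnt (· > ·) F G + pcnt (· > ·) G :=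
        pcnt_append _ _ _
      rw [hGsplit] at ih
      push_cast
      push_cast at ih
      have hopp' : ((F.countP (fun x => decide (a > x)) : ℕ) : ZMod 2) =
          ((F.countP (fun x => decide (x > a)) : ℕ) : ZMod 2) + ((F.length : ℕ) : ZMod 2) := by
        have : ((F.countP (fun x => decide (a > x)) + F.countP (fun x => decide (x > a)) : ℕ) : ZMod 2)
            = ((F.length : ℕ) : ZMod 2) := by rw [hopp]
        push_cast at this
        have h2 : ∀ x : ZMod 2, x + x = 0 := by decide
        linear_combination this - h2 ((F.countP (fun x => decide (x > a)) : ZMod 2))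
      rw [hopp']
      linear_combination ih

theorem stmt8 (L : List ℕ) (p : ℕ → Prop) [DecidablePred p]
    (hp : ∀ x y, p x → ¬ p y → x ≠ y) :
    dis L % 2 =
      (dis (L.filter (fun x => decide (p x)) ++ L.filter (fun x => decide (¬ p x))) +
        ((Finset.range L.length ×ˢ Finset.range L.length).filter
          (fun q => q.1 < q.2 ∧ ¬ p (L.getD q.1 0) ∧ p (L.getD q.2 0))).card) % 2 := by
  have e1 : dis L = pcnt (· > ·) L := card_eq_pcnt _ L
  have e2 : dis (L.filter (fun x => decide (p x)) ++ L.filter (fun x => decide (¬ p x)))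
      = pcnt (· > ·) (L.filter (fun x => decide (p x)) ++ L.filter (fun x => decide (¬ p x))) :=
    card_eq_pcnt _ _
  have e3 : ((Finset.range L.length ×ˢ Finset.range L.length).filter
      (fun q => q.1 < q.2 ∧ ¬ p (L.getD q.1 0) ∧ p (L.getD q.2 0))).card
      = pcnt (fun x y => ¬ p x ∧ p y) L := card_eq_pcnt (fun x y => ¬ p x ∧ p y) L
  rw [e1, e2, e3]
  exact (ZMod.natCast_eq_natCast_iff _ _ 2).mp (by push_cast; exact main_parity p hp L)
end

section
/- Let L be a list of natural numbers. Then dis(L) ≡ dis(L.filter Odd ++ L.filter Even) + k (mod 2), where k is the number of pairs of indices i < j with L_i even and L_j odd. In particular, the parity of the inversion count of a list is determined by the inversion counts of its odd-entry and even-entry subsequences together with the parity of the number of (even, odd)-ordered mixed pairs. -/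
open Finset

open Finset

lemma filter_range_succ_card (q : ℕ → Prop) [DecidablePred q] (n : ℕ) :
    ((range (n+1)).filter q).card
      = (if q 0 then 1 else 0) + ((range n).filter (fun i => q (i+1))).card := by
  induction n with
  | zero => simp [Finset.range_one, Finset.filter_singleton]; split <;> simp
  | succ n ih =>
    conv_lhs => rw [Finset.range_add_one]
    conv_rhs => rw [Finset.range_add_one]
    rw [Finset.filter_insert, Finset.filter_insert]
    by_cases h : q (n+1)
    · rw [if_pos h, if_pos h, Finset.card_insert_of_notMem (by simp),
        Finset.card_insert_of_notMem (by simp), ih]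
      omega
    · rw [if_neg h, if_neg h, ih]

lemma countP_getD (p : ℕ → Bool) (T : List ℕ) :
    ((range T.length).filter (fun i => p (T.getD i 0))).card = T.countP p := by
  induction T with
  | nil => simp
  | cons a T ih =>
    have := filter_range_succ_card (fun i => p ((a :: T).getD i 0) = true) T.length
    simp only [List.getD_cons_zero, List.getD_cons_succ] at this
    rw [List.length_cons, this, List.countP_cons, ← ih]
    split <;> simp_all <;> omega

def disL : List ℕ → ℕ
  | [] => 0
  | a :: T => T.countP (fun x => decide (x < a)) + disL T

def kL : List ℕ → ℕ
  | [] => 0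
  | a :: T => (if Even a then T.countP (fun x => decide (Odd x)) else 0) + kL T

lemma pairs_cons (Q : ℕ → ℕ → Prop) [DecidableRel Q] (n : ℕ) :
    ((range (n+1) ×ˢ range (n+1)).filter (fun p => p.1 < p.2 ∧ Q p.1 p.2)).card
      = ((range n).filter (fun j => Q 0 (j+1))).card
        + ((range n ×ˢ range n).filter (fun p => p.1 < p.2 ∧ Q (p.1+1) (p.2+1))).card := by
  classical
  set S := ((range (n+1) ×ˢ range (n+1)).filter (fun p => p.1 < p.2 ∧ Q p.1 p.2)) with hS
  have hsplit := Finset.card_filter_add_card_filter_not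
    (s := S) (p := fun p => p.1 = 0)
  have h0 : (S.filter (fun p => p.1 = 0)).card
      = ((range n).filter (fun j => Q 0 (j+1))).card := by
    apply Finset.card_bij' (fun p _ => p.2 - 1) (fun j _ => (0, j+1))
    · -- left_inv : (0, i p + 1) = p
      intro p hp
      simp only [hS, Finset.mem_filter, Finset.mem_product, Finset.mem_range] at hp
      obtain ⟨⟨⟨h1, h2⟩, h3, h4⟩, h5⟩ := hp
      have : p.2 - 1 + 1 = p.2 := by omega
      rw [this, ← h5]
    · intro j hj; simp
    · -- hi : i p ∈ t
      intro p hp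
      simp only [hS, Finset.mem_filter, Finset.mem_product, Finset.mem_range] at hp
      obtain ⟨⟨⟨h1, h2⟩, h3, h4⟩, h5⟩ := hp
      simp only [Finset.mem_filter, Finset.mem_range]
      refine ⟨by omega, ?_⟩
      have : p.2 - 1 + 1 = p.2 := by omega
      rw [this, ← h5]; exact h4
    · -- hj : (0, j+1) ∈ s
      intro j hj
      simp only [Finset.mem_filter, Finset.mem_range] at hj
      simp only [hS, Finset.mem_filter, Finset.mem_product, Finset.mem_range]
      exact ⟨⟨⟨by omega, by omega⟩, by omega, hj.2⟩, trivial⟩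
  have h1 : (S.filter (fun p => ¬ p.1 = 0)).card
      = ((range n ×ˢ range n).filter (fun p => p.1 < p.2 ∧ Q (p.1+1) (p.2+1))).card := by
    apply Finset.card_bij' (fun p _ => (p.1 - 1, p.2 - 1)) (fun p _ => (p.1+1, p.2+1))
    · intro p hp
      simp only [hS, Finset.mem_filter, Finset.mem_product, Finset.mem_range] at hp
      obtain ⟨⟨⟨h1, h2⟩, h3, h4⟩, h5⟩ := hp
      have : (p.1 - 1 + 1, p.2 - 1 + 1) = p := by
        have e1 : p.1 - 1 + 1 = p.1 := by omega
        have e2 : p.2 - 1 + 1 = p.2 := by omega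
        rw [e1, e2]
      exact this
    · intro p hp; simp
    · intro p hp
      simp only [hS, Finset.mem_filter, Finset.mem_product, Finset.mem_range] at hp
      obtain ⟨⟨⟨h1, h2⟩, h3, h4⟩, h5⟩ := hp
      simp only [Finset.mem_filter, Finset.mem_product, Finset.mem_range]
      refine ⟨⟨by omega, by omega⟩, by omega, ?_⟩
      have e1 : p.1 - 1 + 1 = p.1 := by omega
      have e2 : p.2 - 1 + 1 = p.2 := by omega
      rw [e1, e2]; exact h4
    · intro p hp
      simp only [Finset.mem_filter, Finset.mem_product, Finset.mem_range] at hp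
      simp only [hS, Finset.mem_filter, Finset.mem_product, Finset.mem_range]
      exact ⟨⟨⟨by omega, by omega⟩, by omega, hp.2.2⟩, by omega⟩
  omega

lemma my_countP_not (p : ℕ → Bool) (l : List ℕ) :
    l.countP p + l.countP (fun x => !p x) = l.length := by
  induction l with
  | nil => simp
  | cons a l ih =>
    simp only [List.countP_cons, List.length_cons]
    cases h : p a <;> simp <;> omega

lemma my_countP_congr {p q : ℕ → Bool} {l : List ℕ} (h : ∀ x ∈ l, p x = q x) :
    l.countP p = l.countP q := by
  induction l with
  | nil => simp
  | cons a l ih =>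
    simp only [List.countP_cons, h a (by simp),
      ih (fun x hx => h x (List.mem_cons_of_mem a hx))]

lemma dis_eq (L : List ℕ) : dis L = disL L := by
  induction L with
  | nil => simp [dis, disL]
  | cons a T ih =>
    rw [dis, List.length_cons, pairs_cons (fun i j => (a :: T).getD i 0 > (a :: T).getD j 0)]
    simp only [List.getD_cons_zero, List.getD_cons_succ]
    rw [disL, ← ih, dis]
    congr 1
    rw [← countP_getD (fun x => decide (x < a)) T]
    apply congrArg
    apply Finset.filter_congr
    intro j _
    simp

lemma k_eq (L : List ℕ) :
    ((Finset.range L.length ×ˢ Finset.range L.length).filter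
      (fun q => q.1 < q.2 ∧ Even (L.getD q.1 0) ∧ Odd (L.getD q.2 0))).card = kL L := by
  induction L with
  | nil => simp [kL]
  | cons a T ih =>
    rw [List.length_cons,
      pairs_cons (fun i j => Even ((a :: T).getD i 0) ∧ Odd ((a :: T).getD j 0))]
    simp only [List.getD_cons_zero, List.getD_cons_succ]
    rw [kL, ih]
    congr 1
    by_cases h : Even a
    · rw [if_pos h, ← countP_getD (fun x => decide (Odd x)) T]
      apply congrArg
      apply Finset.filter_congr
      intro j _
      simp [h]
    · rw [if_neg h]
      rw [Finset.card_eq_zero, Finset.filter_eq_empty_iff]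
      intro j _
      simp [h]

lemma disL_append_cons (A B : List ℕ) (a : ℕ) :
    disL (A ++ a :: B)
      = disL (A ++ B) + A.countP (fun x => decide (a < x))
        + B.countP (fun x => decide (x < a)) := by
  induction A with
  | nil => simp [disL]; omega
  | cons x A ih =>
    simp only [List.cons_append, disL, List.countP_append, List.countP_cons, ih]
    by_cases h : a < x
    · simp [h]; omega
    · simp [h]; omega

lemma countP_split (l : List ℕ) (p : ℕ → Bool) :
    l.countP p
      = (l.filter (fun x => decide (Odd x))).countP p
        + (l.filter (fun x => decide (Even x))).countP p := by
  induction l with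
  | nil => simp
  | cons a l ih =>
    rcases Nat.even_or_odd a with h | h
    · have h' : ¬ Odd a := Nat.not_odd_iff_even.mpr h
      simp only [List.filter_cons, List.countP_cons, h, h', decide_true, decide_false,
        if_true, if_false, ih, decide_eq_true_eq]
      split <;> simp [h, h'] <;> omega
    · have h' : ¬ Even a := Nat.not_even_iff_odd.mpr h
      simp only [List.filter_cons, List.countP_cons, h, h', decide_true, decide_false,
        if_true, if_false, ih, decide_eq_true_eq]
      split <;> simp [h, h'] <;> omega

lemma filter_length_odd (T : List ℕ) :
    (T.filter (fun x => decide (Odd x))).length = T.countP (fun x => decide (Odd x)) :=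
  (List.countP_eq_length_filter).symm

lemma main_lemma (L : List ℕ) :
    disL L % 2
      = (disL (L.filter (fun x => decide (Odd x)) ++ L.filter (fun x => decide (Even x)))
          + kL L) % 2 := by
  induction L with
  | nil => simp [disL, kL]
  | cons a T ih =>
    have hsplit := countP_split T (fun x => decide (x < a))
    rcases Nat.even_or_odd a with ha | ha
    · -- a even
      have ha' : ¬ Odd a := Nat.not_odd_iff_even.mpr ha
      have e1 : (a :: T).filter (fun x => decide (Odd x))
          = T.filter (fun x => decide (Odd x)) := by
        simp [List.filter_cons, ha']
      have e2 : (a :: T).filter (fun x => decide (Even x))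
          = a :: T.filter (fun x => decide (Even x)) := by
        simp [List.filter_cons, ha]
      rw [e1, e2, disL, kL, if_pos ha, disL_append_cons]
      have hkey : (T.filter (fun x => decide (Odd x))).countP (fun x => decide (x < a))
            + (T.filter (fun x => decide (Odd x))).countP (fun x => decide (a < x))
          = T.countP (fun x => decide (Odd x)) := by
        have h1 : (T.filter (fun x => decide (Odd x))).countP (fun x => decide (a < x))
            = (T.filter (fun x => decide (Odd x))).countP (fun x => !decide (x < a)) := by
          apply my_countP_congr
          intro x hx
          have hodd : Odd x := by simpa using List.of_mem_filter hx
          have hne : x ≠ a := by rintro rfl; exact ha' hodd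
          have hiff : (a < x) ↔ ¬ (x < a) := by omega
          simp only [← decide_not, decide_eq_decide]
          omega
        rw [h1, my_countP_not, filter_length_odd]
      omega
    · -- a odd
      have ha' : ¬ Even a := Nat.not_even_iff_odd.mpr ha
      have e1 : (a :: T).filter (fun x => decide (Odd x))
          = a :: T.filter (fun x => decide (Odd x)) := by
        simp [List.filter_cons, ha]
      have e2 : (a :: T).filter (fun x => decide (Even x))
          = T.filter (fun x => decide (Even x)) := by
        simp [List.filter_cons, ha']
      rw [e1, e2, disL, kL, if_neg ha', List.cons_append, disL, List.countP_append]
      omega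

theorem stmt9 (L : List ℕ) :
    dis L % 2 =
      (dis (L.filter (fun x => decide (Odd x)) ++ L.filter (fun x => decide (Even x))) +
        ((Finset.range L.length ×ˢ Finset.range L.length).filter
          (fun q => q.1 < q.2 ∧ Even (L.getD q.1 0) ∧ Odd (L.getD q.2 0))).card) % 2 := by
  rw [dis_eq, dis_eq, k_eq]
  exact main_lemma L
end

section
/- Let Σ be a list of natural numbers that is nearly symmetric, and suppose no entry of Σ equals 1. Then either the reversal of Σ is nearly symmetric, or the list obtained from the reversal of Σ by cyclically shifting it one step (moving the last entry to the front) is nearly symmetric. -/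
lemma filter_self_of_no_one (L : List ℕ) (h : ∀ x ∈ L, x ≠ 1) :
    L.filter (fun x => x ≠ 1) = L :=
  List.filter_eq_self.2 (fun a ha => by simpa using h a ha)

theorem stmt14 (S : List ℕ) (hns : nearSym S) (h1 : ∀ x ∈ S, x ≠ 1) :
    nearSym S.reverse ∨ nearSym (S.reverse.rotate (S.length - 1)) := by
  have hfS : S.filter (fun x => x ≠ 1) = S := filter_self_of_no_one S h1
  unfold nearSym at hns
  rw [hfS] at hns
  simp only at hns
  by_cases hpar : S.length % 2 = 1
  · -- odd case
    right
    rw [if_pos hpar] at hns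
    obtain ⟨a, t, rfl⟩ : ∃ a t, S = a :: t := by
      cases S with
      | nil => simp at hpar
      | cons a t => exact ⟨a, t, rfl⟩
    have hrot : (a :: t).reverse.rotate ((a :: t).length - 1) = a :: t.reverse := by
      simp only [List.reverse_cons, List.length_cons, Nat.add_sub_cancel]
      have := List.rotate_append_length_eq t.reverse [a]
      simpa [List.length_reverse] using this
    rw [hrot]
    unfold nearSym
    have hmem : ∀ x ∈ a :: t.reverse, x ≠ 1 := by
      intro x hx
      apply h1
      rcases hx with _ | hx
      · exact List.mem_cons_self
      · exact List.mem_cons_of_mem a (List.mem_reverse.1 (by assumption))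
    rw [filter_self_of_no_one _ hmem]
    simp only [List.length_cons]
    have hlen : (t.reverse.length + 1) % 2 = 1 := by
      simpa using hpar
    rw [if_pos hlen]
    simp only [List.tail_cons, List.reverse_reverse]
    simpa using hns.symm
  · -- even case
    left
    rw [if_neg hpar] at hns
    unfold nearSym
    have hmem : ∀ x ∈ S.reverse, x ≠ 1 := fun x hx => h1 x (List.mem_reverse.1 hx)
    rw [filter_self_of_no_one _ hmem]
    simp only [List.length_reverse]
    rw [if_neg hpar]
    simp [← hns]
end

section
/- Let σ be a permutation of {1, …, n} realized as swapping the entries at two positions i < j of a list L of natural numbers, where L_i ≠ L_j and the sublist strictly between positions i and j is an even-length palindrome. Then the inversion counts of L and of the swapped list have different parities. -/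
open Finset in
private def ccX (f : ℕ → ℕ) (i j k : ℕ) : ZMod 2 :=
  (if f i > f k then 1 else 0) + (if f j > f k then 1 else 0)

private def ddX (f : ℕ → ℕ) (i j k : ℕ) : ZMod 2 :=
  (if f k > f i then 1 else 0) + (if f k > f j then 1 else 0)

set_option maxHeartbeats 2000000 in
private lemma swap_point (i j : ℕ) (f f' : ℕ → ℕ) (hij : i < j)
    (hfi : f' i = f j) (hfj : f' j = f i)
    (hfk : ∀ k, k ≠ i → k ≠ j → f' k = f k) (hne : f i ≠ f j) :
    ∀ x y : ℕ,
      ((if x < y ∧ f' x > f' y then (1:ZMod 2) else 0)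
        + (if x < y ∧ f x > f y then 1 else 0))
      = (if x = i ∧ y = j then 1 else 0)
        + (if x = i ∧ i < y ∧ y ≠ j then ccX f i j y else 0)
        + (if x = j ∧ j < y then ccX f i j y else 0)
        + (if y = i ∧ x < i then ddX f i j x else 0)
        + (if y = j ∧ x < j ∧ x ≠ i then ddX f i j x else 0) := by
  intro x y
  unfold ccX ddX
  by_cases hxi : x = i <;> by_cases hxj : x = j <;>
    by_cases hyi : y = i <;> by_cases hyj : y = j <;>
    simp only [hxi, hxj, hyi, hyj, hfi, hfj, eq_self_iff_true, true_and, and_true,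
      ne_eq, not_false_eq_true, not_true_eq_false, lt_self_iff_false, false_and,
      and_false, if_false, if_true, ite_true, ite_false] <;>
    (try rw [hfk x hxi hxj]) <;> (try rw [hfk y hyi hyj]) <;>
    split_ifs <;> first | rfl | decide | (exfalso; omega)

private lemma pal_count_even {M : List ℕ} (hp : M.Palindrome) :
    M.length % 2 = 0 → ∀ x, M.count x % 2 = 0 := by
  induction hp with
  | nil => simp
  | singleton y => intro h; simp at h
  | @cons_concat y l pl ih =>
      intro h x
      have hl : l.length % 2 = 0 := by simp at h; omega
      have hx := ih hl x
      rcases eq_or_ne x y with rfl | hxy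
      · simp [List.count_cons, List.count_append]; omega
      · simp [List.count_cons, List.count_append, hxy, Ne.symm hxy]; omega

private lemma count_eq_sum (M : List ℕ) (x : ℕ) :
    M.count x = ∑ t ∈ Finset.range M.length, if M.getD t 0 = x then 1 else 0 := by
  induction M with
  | nil => simp
  | cons c T ih =>
      rw [List.length_cons, Finset.sum_range_succ']
      simp only [List.getD_cons_succ, List.getD_cons_zero]
      rw [← ih]
      rcases eq_or_ne c x with rfl | hcx
      · simp [List.count_cons]
      · simp [List.count_cons, hcx, Ne.symm hcx]

private lemma rowsum (n x0 : ℕ) (hx0 : x0 < n) (w : ℕ → ZMod 2) :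
    ∑ p ∈ Finset.range n ×ˢ Finset.range n, (if p.1 = x0 then w p.2 else 0)
      = ∑ y ∈ Finset.range n, w y := by
  rw [Finset.sum_product]
  have h : ∀ x, (∑ y ∈ Finset.range n, if x = x0 then w y else 0)
      = if x = x0 then ∑ y ∈ Finset.range n, w y else 0 := by
    intro x; split_ifs <;> simp
  simp only [h]
  rw [Finset.sum_ite_eq' (Finset.range n) x0 (fun _ => ∑ y ∈ Finset.range n, w y)]
  simp [hx0]

private lemma colsum (n y0 : ℕ) (hy0 : y0 < n) (w : ℕ → ZMod 2) :
    ∑ p ∈ Finset.range n ×ˢ Finset.range n, (if p.2 = y0 then w p.1 else 0)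
      = ∑ x ∈ Finset.range n, w x := by
  rw [Finset.sum_product_right]
  have h : ∀ y, (∑ x ∈ Finset.range n, if y = y0 then w x else 0)
      = if y = y0 then ∑ x ∈ Finset.range n, w x else 0 := by
    intro y; split_ifs <;> simp
  simp only [h]
  rw [Finset.sum_ite_eq' (Finset.range n) y0 (fun _ => ∑ x ∈ Finset.range n, w x)]
  simp [hy0]

set_option maxHeartbeats 1000000 in
private lemma main_swap (n i j : ℕ) (f f' : ℕ → ℕ) (hij : i < j) (hjn : j < n)
    (hfi : f' i = f j) (hfj : f' j = f i)
    (hfk : ∀ k, k ≠ i → k ≠ j → f' k = f k) (hne : f i ≠ f j)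
    (hca : (∑ k ∈ Finset.Ioo i j, if f k = f i then (1:ZMod 2) else 0) = 0)
    (hcb : (∑ k ∈ Finset.Ioo i j, if f k = f j then (1:ZMod 2) else 0) = 0) :
    (∑ p ∈ Finset.range n ×ˢ Finset.range n,
        if p.1 < p.2 ∧ f' p.1 > f' p.2 then (1:ZMod 2) else 0)
      + (∑ p ∈ Finset.range n ×ˢ Finset.range n,
        if p.1 < p.2 ∧ f p.1 > f p.2 then (1:ZMod 2) else 0) = 1 := by
  classical
  have hin : i < n := hij.trans hjn
  rw [← Finset.sum_add_distrib]
  rw [Finset.sum_congr rfl (fun p _ => swap_point i j f f' hij hfi hfj hfk hne p.1 p.2)]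
  simp only [Finset.sum_add_distrib]
  have e1 : (∑ p ∈ Finset.range n ×ˢ Finset.range n,
      if p.1 = i ∧ p.2 = j then (1:ZMod 2) else 0) = 1 := by
    simp only [ite_and]
    rw [rowsum n i hin (fun y => if y = j then (1:ZMod 2) else 0)]
    rw [Finset.sum_ite_eq' (Finset.range n) j (fun _ => (1:ZMod 2))]
    simp [hjn]
  have e2 : (∑ p ∈ Finset.range n ×ˢ Finset.range n,
      if p.1 = i ∧ i < p.2 ∧ p.2 ≠ j then ccX f i j p.2 else 0)
      = ∑ y ∈ Finset.range n, (if i < y ∧ y ≠ j then ccX f i j y else 0) := by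
    simp only [ite_and]
    exact rowsum n i hin (fun y => if i < y then if y ≠ j then ccX f i j y else 0 else 0)
  have e3 : (∑ p ∈ Finset.range n ×ˢ Finset.range n,
      if p.1 = j ∧ j < p.2 then ccX f i j p.2 else 0)
      = ∑ y ∈ Finset.range n, (if j < y then ccX f i j y else 0) := by
    simp only [ite_and]
    exact rowsum n j hjn (fun y => if j < y then ccX f i j y else 0)
  have e4 : (∑ p ∈ Finset.range n ×ˢ Finset.range n,
      if p.2 = i ∧ p.1 < i then ddX f i j p.1 else 0)
      = ∑ x ∈ Finset.range n, (if x < i then ddX f i j x else 0) := by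
    simp only [ite_and]
    exact colsum n i hin (fun x => if x < i then ddX f i j x else 0)
  have e5 : (∑ p ∈ Finset.range n ×ˢ Finset.range n,
      if p.2 = j ∧ p.1 < j ∧ p.1 ≠ i then ddX f i j p.1 else 0)
      = ∑ x ∈ Finset.range n, (if x < j ∧ x ≠ i then ddX f i j x else 0) := by
    simp only [ite_and]
    exact colsum n j hjn (fun x => if x < j then if x ≠ i then ddX f i j x else 0 else 0)
  rw [e1, e2, e3, e4, e5]
  suffices h : (∑ y ∈ Finset.range n, (if i < y ∧ y ≠ j then ccX f i j y else 0))
      + (∑ y ∈ Finset.range n, (if j < y then ccX f i j y else 0))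
      + (∑ x ∈ Finset.range n, (if x < i then ddX f i j x else 0))
      + (∑ x ∈ Finset.range n, (if x < j ∧ x ≠ i then ddX f i j x else 0)) = 0 by
    linear_combination h
  rw [← Finset.sum_add_distrib, ← Finset.sum_add_distrib, ← Finset.sum_add_distrib]
  have addself : ∀ z : ZMod 2, z + z = 0 := by decide
  have e6 : ∀ k : ℕ,
      ((if i < k ∧ k ≠ j then ccX f i j k else 0) + (if j < k then ccX f i j k else 0)
        + (if k < i then ddX f i j k else 0) + (if k < j ∧ k ≠ i then ddX f i j k else 0))
      = if i < k ∧ k < j then ccX f i j k + ddX f i j k else 0 := by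
    intro k
    split_ifs <;> first | (exfalso; omega) | simp [addself]
  simp only [e6]
  have hsub : Finset.Ioo i j ⊆ Finset.range n := by
    intro k hk; simp only [Finset.mem_Ioo] at hk; simp only [Finset.mem_range]; omega
  rw [← Finset.sum_subset hsub (by
    intro k _ hk
    simp only [Finset.mem_Ioo] at hk
    rw [if_neg]; omega)]
  have e7 : (∑ k ∈ Finset.Ioo i j, if i < k ∧ k < j then ccX f i j k + ddX f i j k else 0)
      = ∑ k ∈ Finset.Ioo i j, ((if f k = f i then (1:ZMod 2) else 0)
          + (if f k = f j then 1 else 0)) := by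
    apply Finset.sum_congr rfl
    intro k hk
    simp only [Finset.mem_Ioo] at hk
    rw [if_pos hk]
    unfold ccX ddX
    split_ifs <;> first | rfl | decide | (exfalso; omega)
  rw [e7, Finset.sum_add_distrib, hca, hcb]
  simp

private lemma dis_cast (L : List ℕ) : ((dis L : ℕ) : ZMod 2)
    = ∑ p ∈ Finset.range L.length ×ˢ Finset.range L.length,
        if p.1 < p.2 ∧ L.getD p.1 0 > L.getD p.2 0 then (1:ZMod 2) else 0 := by
  unfold dis
  rw [Finset.card_filter]
  push_cast
  simp

theorem stmt17 (L : List ℕ) (i j : ℕ) (hij : i < j) (hj : j < L.length)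
    (hne : L.getD i 0 ≠ L.getD j 0)
    (hmidlen : ((L.drop (i + 1)).take (j - i - 1)).length % 2 = 0)
    (hmidpal : (L.drop (i + 1)).take (j - i - 1) =
      ((L.drop (i + 1)).take (j - i - 1)).reverse) :
    dis ((L.set i (L.getD j 0)).set j (L.getD i 0)) % 2 ≠ dis L % 2 := by
  have hin : i < L.length := hij.trans hj
  set a := L.getD i 0 with ha
  set b := L.getD j 0 with hb
  set L' := (L.set i b).set j a with hL'
  set M := (L.drop (i + 1)).take (j - i - 1) with hM
  have hlen' : L'.length = L.length := by simp [hL']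
  have hfi : L'.getD i 0 = b := by
    rw [hL']
    simp [List.getD_eq_getElem?_getD, List.getElem?_set_ne hij.ne', List.getElem?_set_self, hin,
      List.getElem_set, hij.ne, hij.ne']
  have hfj : L'.getD j 0 = a := by
    rw [hL']
    simp [List.getD_eq_getElem?_getD, List.getElem?_set_self, hj]
  have hfk : ∀ k, k ≠ i → k ≠ j → L'.getD k 0 = L.getD k 0 := by
    intro k h1 h2
    rw [hL']
    simp [List.getD_eq_getElem?_getD, List.getElem?_set_ne (Ne.symm h2),
      List.getElem?_set_ne (Ne.symm h1)]
  have hMlen : M.length = j - i - 1 := by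
    simp [hM, List.length_take, List.length_drop]
    omega
  have hMget : ∀ t, t < j - i - 1 → M.getD t 0 = L.getD (i + 1 + t) 0 := by
    intro t ht
    rw [hM]
    simp [List.getD_eq_getElem?_getD, List.getElem?_take, ht, List.getElem?_drop]
  have hcount : ∀ x, M.count x % 2 = 0 :=
    pal_count_even (List.Palindrome.of_reverse_eq hmidpal.symm) hmidlen
  have hsum0 : ∀ x : ℕ, (∑ k ∈ Finset.Ioo i j, if L.getD k 0 = x then (1:ZMod 2) else 0) = 0 := by
    intro x
    have h1 : (∑ k ∈ Finset.Ioo i j, if L.getD k 0 = x then (1:ℕ) else 0) = M.count x := by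
      rw [count_eq_sum, hMlen]
      rw [show Finset.Ioo i j = Finset.Ico (i + 1) j from (Finset.Ico_add_one_left_eq_Ioo ..).symm]
      rw [Finset.sum_Ico_eq_sum_range]
      rw [show j - (i + 1) = j - i - 1 from by omega]
      apply Finset.sum_congr rfl
      intro t ht
      simp only [Finset.mem_range] at ht
      rw [hMget t ht]
    have h2 : ((M.count x : ℕ) : ZMod 2) = 0 :=
      (ZMod.natCast_eq_zero_iff _ _).mpr (Nat.dvd_of_mod_eq_zero (hcount x))
    rw [← h1] at h2
    rw [Nat.cast_sum] at h2
    simpa [apply_ite (fun m : ℕ => (m : ZMod 2))] using h2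
  have key := main_swap L.length i j (fun k => L.getD k 0) (fun k => L'.getD k 0)
    hij hj hfi hfj hfk hne (hsum0 a) (hsum0 b)
  have hcast : ((dis L' : ℕ) : ZMod 2) + ((dis L : ℕ) : ZMod 2) = 1 := by
    rw [dis_cast, dis_cast, hlen']
    exact key
  intro h
  rw [show ((dis L' : ℕ) : ZMod 2) = ((dis L : ℕ) : ZMod 2) from by
    rw [← ZMod.natCast_mod (dis L') 2, ← ZMod.natCast_mod (dis L) 2, h]] at hcast
  exact (by decide : ∀ z : ZMod 2, z + z ≠ 1) _ hcast
end
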